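/- arXiv:math/0510592 — 2 statements merged into one kernel-verified Lean document; each statement's English description precedes it below -/
import Mathlib

section
/- Let Ω ⊆ ℝ² be a bounded open set, 1 < p < ∞ and q := p/(p−1). Let f : Ω × ℝ² → ℝ be a Carathéodory function such that for a.e. x ∈ Ω the map ξ ↦ f(x,ξ) is convex, positively p-homogeneous, and satisfies α|ξ|^p ≤ f(x,ξ) for all ξ ∈ ℝ² and some α > 0; let f*(x,·) denote the convex conjugate of f(x,·). Let z, w : Ω → ℝ² be measurable functions such that x ↦ f(x, z(x)), x ↦ f*(x, w(x)) and x ↦ z(x)·w(x) are Lebesgue integrable on Ω. Then ∫_Ω z(x)·w(x) dx ≤ p^{1/p} q^{1/q} (∫_Ω f(x, z(x)) dx)^{1/p} (∫_Ω f*(x, w(x)) dx)^{1/q}. -/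
/-!
Scaling the Fenchel–Young inequality `z·w ≤ f(z) + f*(w)` by `t z`, and using the
`p`-homogeneity of `f`, gives `t z·w ≤ t^p f(z) + f*(w)` pointwise for every `t > 0`.
Integrating, `t I ≤ t^p A + B` for all `t > 0`, and minimising over `t` (the minimiser
satisfies `p t^p A = q B`) yields `I ≤ (p A)^{1/p} (q B)^{1/q}`.
-/

open Set MeasureTheory Filter Topology RealInnerProductSpace

lemma mul_sub_mul_rpow_le {α p b r : ℝ} (hα : 0 < α) (hp : 1 < p) (hb : 0 ≤ b) (hr : 0 ≤ r) :
    b * r - α * r ^ p ≤ b * (b / α) ^ (p - 1)⁻¹ := by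
  have hp1 : p - 1 ≠ 0 := by linarith
  set R := (b / α) ^ (p - 1)⁻¹
  rcases le_total r R with hrR | hRr
  · nlinarith [Real.rpow_nonneg hr p]
  · have hRp : R ^ (p - 1) = b / α := Real.rpow_inv_rpow (by positivity) hp1
    have hbr : b ≤ α * r ^ (p - 1) := by
      rw [← div_le_iff₀' hα, ← hRp]
      exact Real.rpow_le_rpow (by positivity) hRr (by linarith)
    have hrp : r ^ p = r ^ (p - 1) * r := by
      rw [← Real.rpow_add_one' hr (by linarith), sub_add_cancel]
    nlinarith [Real.rpow_nonneg (by positivity : 0 ≤ b / α) (p - 1)⁻¹]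

section Conjugate

variable {E : Type*} [NormedAddCommGroup E] [InnerProductSpace ℝ E]

/-- Only meaningful where the supremum is bounded: `⨆` of an unbounded family of reals is `0`. -/
noncomputable def convexConjugate (g : E → ℝ) (ζ : E) : ℝ := ⨆ ξ, ⟪ζ, ξ⟫ - g ξ

lemma bddAbove_range_inner_sub_of_coercive {g : E → ℝ} {α p : ℝ} (hα : 0 < α) (hp : 1 < p)
    (hg : ∀ ξ, α * ‖ξ‖ ^ p ≤ g ξ) (ζ : E) :
    BddAbove (range fun ξ => ⟪ζ, ξ⟫ - g ξ) := by
  refine ⟨‖ζ‖ * (‖ζ‖ / α) ^ (p - 1)⁻¹, ?_⟩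
  rintro _ ⟨ξ, rfl⟩
  have := mul_sub_mul_rpow_le hα hp (norm_nonneg ζ) (norm_nonneg ξ)
  linarith [real_inner_le_norm ζ ξ, hg ξ]

lemma inner_sub_le_convexConjugate {g : E → ℝ} {ζ : E}
    (hbdd : BddAbove (range fun ξ => ⟪ζ, ξ⟫ - g ξ)) (ξ : E) :
    ⟪ζ, ξ⟫ - g ξ ≤ convexConjugate g ζ :=
  le_ciSup hbdd ξ

lemma apply_zero_of_rpow_homogeneous {g : E → ℝ} {p : ℝ} (hp : 0 < p)
    (hhom : ∀ t : ℝ, 0 < t → ∀ ξ, g (t • ξ) = t ^ p * g ξ) : g 0 = 0 := by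
  have h2 := hhom 2 two_pos 0
  rw [smul_zero] at h2
  have : (1 : ℝ) < 2 ^ p := Real.one_lt_rpow one_lt_two hp
  nlinarith

lemma convexConjugate_nonneg_of_rpow_homogeneous {g : E → ℝ} {p : ℝ} {ζ : E} (hp : 0 < p)
    (hhom : ∀ t : ℝ, 0 < t → ∀ ξ, g (t • ξ) = t ^ p * g ξ)
    (hbdd : BddAbove (range fun ξ => ⟪ζ, ξ⟫ - g ξ)) :
    0 ≤ convexConjugate g ζ := by
  simpa [apply_zero_of_rpow_homogeneous hp hhom] using inner_sub_le_convexConjugate hbdd 0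

lemma mul_inner_le_rpow_mul_add_convexConjugate {g : E → ℝ} {p t : ℝ} {ζ : E}
    (hhom : ∀ t : ℝ, 0 < t → ∀ ξ, g (t • ξ) = t ^ p * g ξ)
    (hbdd : BddAbove (range fun ξ => ⟪ζ, ξ⟫ - g ξ)) (ht : 0 < t) (ξ : E) :
    t * ⟪ξ, ζ⟫ ≤ t ^ p * g ξ + convexConjugate g ζ := by
  have := inner_sub_le_convexConjugate hbdd (t • ξ)
  rw [real_inner_smul_right, hhom t ht, real_inner_comm] at this
  linarith

end Conjugate

section Optimization

variable {p q A B I : ℝ}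

lemma le_rpow_mul_rpow_of_forall_mul_le_of_pos (hpq : p.HolderConjugate q) (hA : 0 < A)
    (hB : 0 < B) (h : ∀ t > 0, t * I ≤ t ^ p * A + B) :
    I ≤ (p * A) ^ p⁻¹ * (q * B) ^ q⁻¹ := by
  have hp := hpq.pos
  have hq := hpq.symm.pos
  set t := (q * B / (p * A)) ^ p⁻¹
  have ht : 0 < t := by positivity
  have htp : t ^ p * (p * A) = q * B := by
    rw [Real.rpow_inv_rpow (by positivity) hp.ne', div_mul_cancel₀ _ (by positivity)]
  refine le_of_mul_le_mul_left ?_ ht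
  calc t * I ≤ t ^ p * A + B := h t ht
    _ = q * B := mul_left_cancel₀ hp.ne' <| by
      linear_combination htp - B * hpq.mul_eq_add
    _ = (q * B) ^ p⁻¹ * (q * B) ^ q⁻¹ := by
      rw [← Real.rpow_add (by positivity), hpq.inv_add_inv_eq_one, Real.rpow_one]
    _ = t * ((p * A) ^ p⁻¹ * (q * B) ^ q⁻¹) := by
      rw [← htp, Real.mul_rpow (by positivity) (by positivity),
        Real.rpow_rpow_inv ht.le hp.ne', mul_assoc]

lemma le_rpow_mul_rpow_of_forall_mul_le (hpq : p.HolderConjugate q) (hA : 0 ≤ A)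
    (hB : 0 ≤ B) (h : ∀ t > 0, t * I ≤ t ^ p * A + B) :
    I ≤ (p * A) ^ p⁻¹ * (q * B) ^ q⁻¹ := by
  have hp := hpq.pos
  have hq := hpq.symm.pos
  have hlim : Tendsto (fun ε => (p * (A + ε)) ^ p⁻¹ * (q * (B + ε)) ^ q⁻¹) (𝓝[>] 0)
      (𝓝 ((p * A) ^ p⁻¹ * (q * B) ^ q⁻¹)) := by
    have hcont : Continuous fun ε : ℝ => (p * (A + ε)) ^ p⁻¹ * (q * (B + ε)) ^ q⁻¹ :=
      ((continuous_const.mul (continuous_const.add continuous_id)).rpow_const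
          fun _ => Or.inr (by positivity)).mul
        ((continuous_const.mul (continuous_const.add continuous_id)).rpow_const
          fun _ => Or.inr (by positivity))
    simpa using (hcont.tendsto 0).mono_left nhdsWithin_le_nhds
  refine ge_of_tendsto hlim ?_
  filter_upwards [self_mem_nhdsWithin] with ε (hε : 0 < ε)
  refine le_rpow_mul_rpow_of_forall_mul_le_of_pos hpq (by positivity) (by positivity)
    fun t ht => (h t ht).trans ?_
  nlinarith [Real.rpow_pos_of_pos ht p]

end Optimization

theorem stmt_4_general (Ω : Set (EuclideanSpace ℝ (Fin 2)))
    (p q : ℝ) (hp : 1 < p) (hq : q = p / (p - 1))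
    (f : EuclideanSpace ℝ (Fin 2) → EuclideanSpace ℝ (Fin 2) → ℝ)
    (α : ℝ) (hα : 0 < α)
    (hae : ∀ᵐ x ∂(volume.restrict Ω),
      ConvexOn ℝ Set.univ (f x) ∧
      (∀ t : ℝ, 0 < t → ∀ ξ, f x (t • ξ) = t ^ p * f x ξ) ∧
      (∀ ξ, α * ‖ξ‖ ^ p ≤ f x ξ))
    (fstar : EuclideanSpace ℝ (Fin 2) → EuclideanSpace ℝ (Fin 2) → ℝ)
    (hfstar : ∀ x ζ, fstar x ζ = ⨆ ξ : EuclideanSpace ℝ (Fin 2), ((inner ℝ ζ ξ : ℝ) - f x ξ))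
    (z w : EuclideanSpace ℝ (Fin 2) → EuclideanSpace ℝ (Fin 2))
    (hfz : IntegrableOn (fun x => f x (z x)) Ω)
    (hfw : IntegrableOn (fun x => fstar x (w x)) Ω)
    (hzw : IntegrableOn (fun x => (inner ℝ (z x) (w x) : ℝ)) Ω) :
    ∫ x in Ω, (inner ℝ (z x) (w x) : ℝ) ≤
      p ^ (1 / p) * q ^ (1 / q) * (∫ x in Ω, f x (z x)) ^ (1 / p) *
        (∫ x in Ω, fstar x (w x)) ^ (1 / q) := by
  have hpq : p.HolderConjugate q := (Real.holderConjugate_iff_eq_conjExponent hp).2 hq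
  have hpointwise : ∀ᵐ x ∂(volume.restrict Ω), 0 ≤ f x (z x) ∧ 0 ≤ fstar x (w x) ∧
      ∀ t > 0, t * ⟪z x, w x⟫ ≤ t ^ p * f x (z x) + fstar x (w x) := by
    filter_upwards [hae] with x hx
    obtain ⟨-, hhom, hcoer⟩ := hx
    have hbdd := bddAbove_range_inner_sub_of_coercive hα hp hcoer (w x)
    refine ⟨(by positivity : 0 ≤ α * ‖z x‖ ^ p).trans (hcoer _), ?_, ?_⟩
    · exact hfstar x _ ▸ convexConjugate_nonneg_of_rpow_homogeneous hpq.pos hhom hbdd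
    · exact hfstar x _ ▸ fun t ht => mul_inner_le_rpow_mul_add_convexConjugate hhom hbdd ht _
  have hA : 0 ≤ ∫ x in Ω, f x (z x) :=
    integral_nonneg_of_ae (hpointwise.mono fun _ hx => hx.1)
  have hB : 0 ≤ ∫ x in Ω, fstar x (w x) :=
    integral_nonneg_of_ae (hpointwise.mono fun _ hx => hx.2.1)
  have hintegrated : ∀ t > 0, t * ∫ x in Ω, ⟪z x, w x⟫ ≤
      t ^ p * (∫ x in Ω, f x (z x)) + ∫ x in Ω, fstar x (w x) := fun t ht => by
    rw [← integral_const_mul, ← integral_const_mul, ← integral_add (hfz.const_mul _) hfw]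
    exact integral_mono_ae (hzw.const_mul t) ((hfz.const_mul _).add hfw)
      (hpointwise.mono fun _ hx => hx.2.2 t ht)
  calc ∫ x in Ω, ⟪z x, w x⟫
      ≤ (p * ∫ x in Ω, f x (z x)) ^ p⁻¹ * (q * ∫ x in Ω, fstar x (w x)) ^ q⁻¹ :=
        le_rpow_mul_rpow_of_forall_mul_le hpq hA hB hintegrated
    _ = _ := by
      rw [Real.mul_rpow hpq.pos.le hA, Real.mul_rpow hpq.symm.pos.le hB]
      simp only [one_div]
      ring

theorem stmt_4 (Ω : Set (EuclideanSpace ℝ (Fin 2)))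
    (hΩopen : IsOpen Ω) (hΩbdd : Bornology.IsBounded Ω)
    (p q : ℝ) (hp : 1 < p) (hq : q = p / (p - 1))
    (f : EuclideanSpace ℝ (Fin 2) → EuclideanSpace ℝ (Fin 2) → ℝ)
    (α : ℝ) (hα : 0 < α)
    (hmeas : ∀ ξ, Measurable fun x => f x ξ)
    (hae : ∀ᵐ x ∂(volume.restrict Ω),
      ConvexOn ℝ Set.univ (f x) ∧
      (∀ t : ℝ, 0 < t → ∀ ξ, f x (t • ξ) = t ^ p * f x ξ) ∧
      (∀ ξ, α * ‖ξ‖ ^ p ≤ f x ξ))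
    (fstar : EuclideanSpace ℝ (Fin 2) → EuclideanSpace ℝ (Fin 2) → ℝ)
    (hfstar : ∀ x ζ, fstar x ζ = ⨆ ξ : EuclideanSpace ℝ (Fin 2), ((inner ℝ ζ ξ : ℝ) - f x ξ))
    (z w : EuclideanSpace ℝ (Fin 2) → EuclideanSpace ℝ (Fin 2))
    (hz : Measurable z) (hw : Measurable w)
    (hfz : IntegrableOn (fun x => f x (z x)) Ω)
    (hfw : IntegrableOn (fun x => fstar x (w x)) Ω)
    (hzw : IntegrableOn (fun x => (inner ℝ (z x) (w x) : ℝ)) Ω) :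
    ∫ x in Ω, (inner ℝ (z x) (w x) : ℝ) ≤
      p ^ (1 / p) * q ^ (1 / q) * (∫ x in Ω, f x (z x)) ^ (1 / p) *
        (∫ x in Ω, fstar x (w x)) ^ (1 / q) :=
  stmt_4_general Ω p q hp hq f α hα hae fstar hfstar z w hfz hfw hzw
end

section
/- Fix an integer N ≥ 2 and a constant M > 1. There exists a constant C₀ > 0, depending only on N and M, such that for every Lipschitz function f : Q' → [1, M] and every function u : ℝ^N → ℝ that is continuously differentiable on an open neighborhood of the closure of Q_f, one has ∫_{Q_f} u² dx ≤ C₀ ( ∫_A u² dx + ∫_{Q_f} |∇u|² dx ), where A := (0,1)^{N−1} × (0,1). -/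
open Set MeasureTheory

noncomputable section

/-- Projection onto the first `d` coordinates. -/
def proj {d : ℕ} (x : EuclideanSpace ℝ (Fin (d + 1))) : EuclideanSpace ℝ (Fin d) :=
  WithLp.toLp 2 (fun i : Fin d => x i.castSucc)

/-- Embedding of the base `Q' × {0}`. -/
def embed {d : ℕ} (y : EuclideanSpace ℝ (Fin d)) : EuclideanSpace ℝ (Fin (d + 1)) :=
  WithLp.toLp 2 (fun i : Fin (d + 1) => if h : (i : ℕ) < d then y ⟨i, h⟩ else 0)

/-- The open unit cube `Q' = (0,1)^d`. -/
def cube (d : ℕ) : Set (EuclideanSpace ℝ (Fin d)) :=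
  {y | ∀ i, y i ∈ Ioo (0 : ℝ) 1}

/-- The open subgraph domain `Q_f`. -/
def Qf {d : ℕ} (f : EuclideanSpace ℝ (Fin d) → ℝ) : Set (EuclideanSpace ℝ (Fin (d + 1))) :=
  {x | proj x ∈ cube d ∧ x (Fin.last d) ∈ Ioo 0 (f (proj x))}

/-!
On a vertical segment `t ↦ (y, t)`, `0 ≤ t ≤ b := f y ∈ [1, M]`, put `g t := u (y, t)`. The
fundamental theorem of calculus for `g²` and the weighted AM-GM inequality
`|2 g g'| ≤ g² / (2M) + 2M g'²` give `g t ² ≤ g s ² + (∫₀ᵇ g²) / (2M) + 2M ∫₀ᵇ g'²`; integrating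
in `t` over `[0, b]` and absorbing the middle term (as `b ≤ M`) yields
`∫₀ᵇ g² ≤ 2M g s ² + 4M² ∫₀ᵇ g'²`. Averaging over `s ∈ (0, 1)`, whose segment lies in `A`, and
using `|g'| ≤ |∇u|` bounds the integral of `u²` over the segment. Fubini in the coordinates
`x = (y, t)` integrates these bounds over `y ∈ Q'`, which gives the claim with `C₀ = 4M²`; it is
carried out for lower Lebesgue integrals, where no integrability side conditions arise.
-/

open scoped ENNReal Interval

section OneDimensional

variable {g g' : ℝ → ℝ} {a b : ℝ}

theorem abs_two_mul_mul_le_div_add_mul {c : ℝ} (hc : 0 < c) (p q : ℝ) :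
    |2 * p * q| ≤ p ^ 2 / c + c * q ^ 2 := by
  rw [div_add' _ _ _ hc.ne', le_div_iff₀ hc]
  rcases abs_cases (2 * p * q) with ⟨h, _⟩ | ⟨h, _⟩ <;> rw [h] <;>
    nlinarith [sq_nonneg (p - c * q), sq_nonneg (p + c * q)]

theorem sub_le_integral_abs_of_hasDerivAt (hg : ∀ x ∈ Icc a b, HasDerivAt g (g' x) x)
    (hg' : ContinuousOn g' (Icc a b)) {s t : ℝ} (hs : s ∈ Icc a b) (ht : t ∈ Icc a b) :
    g t - g s ≤ ∫ x in a..b, |g' x| := by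
  have hst : uIcc s t ⊆ Icc a b := uIcc_subset_Icc hs ht
  calc g t - g s = ∫ x in s..t, g' x :=
        (intervalIntegral.integral_eq_sub_of_hasDerivAt (fun x hx => hg x (hst hx))
          (hg'.mono hst).intervalIntegrable).symm
    _ ≤ ‖∫ x in s..t, g' x‖ := le_abs_self _
    _ ≤ ∫ x in Ι s t, ‖g' x‖ := intervalIntegral.norm_integral_le_integral_norm_uIoc
    _ ≤ ∫ x in Ioc a b, ‖g' x‖ :=
        setIntegral_mono_set (hg'.norm.integrableOn_Icc.mono_set Ioc_subset_Icc_self)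
          (.of_forall fun _ => norm_nonneg _)
          (Ioc_subset_Ioc (le_min hs.1 ht.1) (max_le hs.2 ht.2)).eventuallyLE
    _ = ∫ x in a..b, |g' x| := (intervalIntegral.integral_of_le (hs.1.trans hs.2)).symm

theorem integral_sq_le_of_hasDerivAt {M s : ℝ} (hM : 0 < M) (hbM : b ≤ M)
    (hg : ∀ x ∈ Icc 0 b, HasDerivAt g (g' x) x) (hg' : ContinuousOn g' (Icc 0 b))
    (hs : s ∈ Icc 0 b) :
    ∫ t in 0..b, g t ^ 2 ≤ 2 * M * g s ^ 2 + 4 * M ^ 2 * ∫ t in 0..b, g' t ^ 2 := by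
  have hb : 0 ≤ b := hs.1.trans hs.2
  have hgc : ContinuousOn g (Icc 0 b) := fun x hx => (hg x hx).continuousAt.continuousWithinAt
  have hint : ∀ {h : ℝ → ℝ}, ContinuousOn h (Icc 0 b) → IntervalIntegrable h volume 0 b :=
    fun hh => hh.intervalIntegrable_of_Icc hb
  set I := ∫ t in 0..b, g t ^ 2
  set K := ∫ t in 0..b, g' t ^ 2
  have hg2 : ∀ x ∈ Icc 0 b, HasDerivAt (fun x => g x ^ 2) (2 * g x * g' x) x := fun x hx => by
    simpa using (hg x hx).fun_pow 2
  have hgg' : ContinuousOn (fun x => 2 * g x * g' x) (Icc 0 b) :=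
    (continuousOn_const.mul hgc).mul hg'
  have hAMGM : ∫ x in 0..b, |2 * g x * g' x| ≤ I / (2 * M) + 2 * M * K := by
    calc ∫ x in 0..b, |2 * g x * g' x|
        ≤ ∫ x in 0..b, (g x ^ 2 / (2 * M) + 2 * M * g' x ^ 2) :=
          intervalIntegral.integral_mono_on hb (hint hgg'.abs)
            (hint (((hgc.pow 2).div_const _).add (continuousOn_const.mul (hg'.pow 2))))
            fun x _ => abs_two_mul_mul_le_div_add_mul (by positivity) _ _
      _ = I / (2 * M) + 2 * M * K := by
          rw [intervalIntegral.integral_add (f := fun x => g x ^ 2 / (2 * M))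
            (g := fun x => 2 * M * g' x ^ 2) (hint ((hgc.pow 2).div_const _))
            (hint (continuousOn_const.mul (hg'.pow 2))), intervalIntegral.integral_div,
            intervalIntegral.integral_const_mul]
  have hpt : ∀ t ∈ Icc 0 b, g t ^ 2 ≤ g s ^ 2 + (I / (2 * M) + 2 * M * K) := fun t ht => by
    linarith [sub_le_integral_abs_of_hasDerivAt hg2 hgg' hs ht]
  have hI : I ≤ b * (g s ^ 2 + (I / (2 * M) + 2 * M * K)) := by
    have := intervalIntegral.integral_mono_on hb (hint (hgc.pow 2)) intervalIntegrable_const hpt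
    rwa [intervalIntegral.integral_const, sub_zero, smul_eq_mul] at this
  have hK : 0 ≤ K := intervalIntegral.integral_nonneg hb fun _ _ => sq_nonneg _
  have hI₀ : 0 ≤ I := intervalIntegral.integral_nonneg hb fun _ _ => sq_nonneg _
  have : I ≤ M * g s ^ 2 + I / 2 + 2 * M ^ 2 * K :=
    calc I ≤ M * (g s ^ 2 + (I / (2 * M) + 2 * M * K)) :=
          hI.trans (mul_le_mul_of_nonneg_right hbM (by positivity))
      _ = M * g s ^ 2 + I / 2 + 2 * M ^ 2 * K := by field_simp; ring
  linarith

theorem integral_sq_le_integral_sq_unit_add {M : ℝ} (h1b : 1 ≤ b) (hbM : b ≤ M)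
    (hg : ∀ x ∈ Icc 0 b, HasDerivAt g (g' x) x) (hg' : ContinuousOn g' (Icc 0 b)) :
    ∫ t in 0..b, g t ^ 2 ≤ 2 * M * (∫ t in 0..1, g t ^ 2) + 4 * M ^ 2 * ∫ t in 0..b, g' t ^ 2 := by
  have hg1 : ContinuousOn (fun t => g t ^ 2) (Icc 0 1) := fun x hx =>
    ((hg x ⟨hx.1, hx.2.trans h1b⟩).continuousAt.pow 2).continuousWithinAt
  calc ∫ t in 0..b, g t ^ 2 = ∫ _ in (0 : ℝ)..1, ∫ t in 0..b, g t ^ 2 := by simp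
    _ ≤ ∫ s in (0 : ℝ)..1, (2 * M * g s ^ 2 + 4 * M ^ 2 * ∫ t in 0..b, g' t ^ 2) :=
        intervalIntegral.integral_mono_on zero_le_one intervalIntegrable_const
          ((hg1.const_smul (2 * M)).intervalIntegrable_of_Icc zero_le_one |>.add
            intervalIntegrable_const) fun s hs =>
          integral_sq_le_of_hasDerivAt (by linarith) hbM hg hg' ⟨hs.1, hs.2.trans h1b⟩
    _ = 2 * M * (∫ t in 0..1, g t ^ 2) + 4 * M ^ 2 * ∫ t in 0..b, g' t ^ 2 := by
        rw [intervalIntegral.integral_add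
          ((hg1.intervalIntegrable_of_Icc zero_le_one).const_mul _) intervalIntegrable_const,
          intervalIntegral.integral_const_mul]
        simp

end OneDimensional

theorem ofReal_intervalIntegral_eq_setLIntegral_Ioo {h : ℝ → ℝ} {a b : ℝ} (hab : a ≤ b)
    (hh : ContinuousOn h (Icc a b)) (h0 : ∀ t, 0 ≤ h t) :
    ENNReal.ofReal (∫ t in a..b, h t) = ∫⁻ t in Ioo a b, ENNReal.ofReal (h t) := by
  rw [intervalIntegral.integral_of_le hab, integral_Ioc_eq_integral_Ioo,
    ofReal_integral_eq_lintegral_ofReal (hh.integrableOn_Icc.mono_set Ioo_subset_Icc_self)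
      (.of_forall h0)]

section Gradient

variable {F : Type*} [NormedAddCommGroup F] [InnerProductSpace ℝ F] [CompleteSpace F]
  {u : F → ℝ}

theorem norm_gradient_eq_norm_fderiv (x : F) : ‖gradient u x‖ = ‖fderiv ℝ u x‖ := by
  rw [← toDual_gradient, LinearIsometryEquiv.norm_map]

theorem ContDiffOn.continuousOn_norm_gradient {U : Set F} (hU : IsOpen U)
    (hu : ContDiffOn ℝ 1 u U) : ContinuousOn (fun x => ‖gradient u x‖) U := by
  simp_rw [norm_gradient_eq_norm_fderiv]
  exact (hu.continuousOn_fderiv_of_isOpen hU le_rfl).norm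

theorem abs_fderiv_apply_le_norm_gradient_mul (x v : F) :
    |fderiv ℝ u x v| ≤ ‖gradient u x‖ * ‖v‖ := by
  rw [← inner_gradient_left]
  exact abs_real_inner_le_norm _ _

end Gradient

section Coordinates

variable {d : ℕ}

def splitLast (d : ℕ) : EuclideanSpace ℝ (Fin (d + 1)) ≃ᵐ ℝ × EuclideanSpace ℝ (Fin d) :=
  (MeasurableEquiv.toLp 2 (Fin (d + 1) → ℝ)).symm.trans <|
    (MeasurableEquiv.piFinSuccAbove (fun _ => ℝ) (Fin.last d)).trans <|
      MeasurableEquiv.prodCongr (MeasurableEquiv.refl ℝ) (MeasurableEquiv.toLp 2 (Fin d → ℝ))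

theorem splitLast_apply (x : EuclideanSpace ℝ (Fin (d + 1))) :
    splitLast d x = (x (Fin.last d), proj x) := by
  simp only [splitLast, MeasurableEquiv.piFinSuccAbove, Fin.insertNthEquiv, Fin.removeNth_last,
    Equiv.symm_mk, MeasurableEquiv.trans_apply, MeasurableEquiv.toLp_symm_apply,
    MeasurableEquiv.coe_mk, Equiv.coe_fn_mk, proj]
  rfl

theorem measurePreserving_splitLast : MeasurePreserving (splitLast d) :=
  ((MeasurePreserving.id volume).prod (PiLp.volume_preserving_toLp (Fin d))).comp <|
    (volume_preserving_piFinSuccAbove (fun _ => ℝ) (Fin.last d)).comp <|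
      EuclideanSpace.volume_preserving_symm_measurableEquiv_toLp (Fin (d + 1))

def joinLast (y : EuclideanSpace ℝ (Fin d)) (t : ℝ) : EuclideanSpace ℝ (Fin (d + 1)) :=
  (splitLast d).symm (t, y)

theorem joinLast_last (y : EuclideanSpace ℝ (Fin d)) (t : ℝ) : joinLast y t (Fin.last d) = t :=
  congrArg Prod.fst (((splitLast d).apply_symm_apply (t, y)).symm.trans (splitLast_apply _)).symm

theorem proj_joinLast (y : EuclideanSpace ℝ (Fin d)) (t : ℝ) : proj (joinLast y t) = y :=
  congrArg Prod.snd (((splitLast d).apply_symm_apply (t, y)).symm.trans (splitLast_apply _)).symm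

theorem joinLast_castSucc (y : EuclideanSpace ℝ (Fin d)) (t : ℝ) (j : Fin d) :
    joinLast y t j.castSucc = y j :=
  congrArg (· j) (proj_joinLast y t)

theorem hasDerivAt_joinLast (y : EuclideanSpace ℝ (Fin d)) (t : ℝ) :
    HasDerivAt (joinLast y) (EuclideanSpace.single (Fin.last d) 1) t := by
  have : joinLast y = fun t => joinLast y 0 + t • EuclideanSpace.single (Fin.last d) (1 : ℝ) := by
    ext t i
    induction i using Fin.lastCases <;>
      simp [joinLast_last, joinLast_castSucc, (Fin.castSucc_lt_last _).ne]
  rw [this]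
  simpa using ((hasDerivAt_id t).smul_const _).const_add (joinLast y 0)

theorem continuous_joinLast (y : EuclideanSpace ℝ (Fin d)) : Continuous (joinLast y) :=
  continuous_iff_continuousAt.2 fun t => (hasDerivAt_joinLast y t).continuousAt

theorem continuous_proj : Continuous (proj (d := d)) := by
  unfold proj; fun_prop

theorem isOpen_cube : IsOpen (cube d) := by
  simp only [cube, ofPred_forall]
  exact isOpen_iInter_of_finite fun i => isOpen_Ioo.preimage (by fun_prop)

theorem joinLast_mem_Qf {f : EuclideanSpace ℝ (Fin d) → ℝ} {y : EuclideanSpace ℝ (Fin d)} {t : ℝ} :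
    joinLast y t ∈ Qf f ↔ y ∈ cube d ∧ t ∈ Ioo 0 (f y) := by
  simp only [Qf, mem_ofPred_eq, proj_joinLast, joinLast_last]

theorem isOpen_Qf {f : EuclideanSpace ℝ (Fin d) → ℝ} (hf : ContinuousOn f (cube d)) :
    IsOpen (Qf f) :=
  show IsOpen (proj ⁻¹' cube d ∩
      (fun x => (x (Fin.last d), f (proj x))) ⁻¹' ({p : ℝ × ℝ | 0 < p.1} ∩ {p | p.1 < p.2})) from
  ContinuousOn.isOpen_inter_preimage
    ((PiLp.continuous_apply 2 _ _).continuousOn.prodMk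
      (hf.comp continuous_proj.continuousOn fun _ => id))
    (isOpen_cube.preimage continuous_proj)
    ((isOpen_lt continuous_const continuous_fst).inter (isOpen_lt continuous_fst continuous_snd))

end Coordinates

section Subgraph

variable {d : ℕ} {f : EuclideanSpace ℝ (Fin d) → ℝ}

theorem Qf_mono {g : EuclideanSpace ℝ (Fin d) → ℝ} (hfg : ∀ y ∈ cube d, f y ≤ g y) :
    Qf f ⊆ Qf g :=
  fun _ ⟨hx, h0, hf⟩ => ⟨hx, h0, hf.trans_le (hfg _ hx)⟩

theorem joinLast_mem_closure_Qf {y : EuclideanSpace ℝ (Fin d)} (hy : y ∈ cube d) (hfy : 0 < f y)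
    {t : ℝ} (ht : t ∈ Icc 0 (f y)) : joinLast y t ∈ closure (Qf f) := by
  rw [← closure_Ioo hfy.ne] at ht
  refine closure_mono ?_ (image_closure_subset_closure_image (continuous_joinLast y) ⟨t, ht, rfl⟩)
  exact image_subset_iff.2 fun s hs => joinLast_mem_Qf.2 ⟨hy, hs⟩

theorem isCompact_closure_Qf {M : ℝ} (hf : ∀ y ∈ cube d, f y ≤ M) :
    IsCompact (closure (Qf f)) := by
  have hK : IsCompact (WithLp.toLp 2 '' Icc (0 : Fin (d + 1) → ℝ) fun _ => max 1 M) :=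
    isCompact_Icc.image (PiLp.continuous_toLp 2 _)
  refine hK.of_isClosed_subset isClosed_closure (closure_minimal ?_ hK.isClosed)
  rintro x ⟨hx, h0, hfx⟩
  have hxi : ∀ i, x i ∈ Icc 0 (max 1 M) := Fin.lastCases
    ⟨h0.le, hfx.le.trans ((hf _ hx).trans (le_max_right 1 M))⟩
    fun j => ⟨(hx j).1.le, (hx j).2.le.trans (le_max_left 1 M)⟩
  exact ⟨x.ofLp, ⟨fun i => (hxi i).1, fun i => (hxi i).2⟩, rfl⟩

theorem aemeasurable_comp_joinLast {G : EuclideanSpace ℝ (Fin (d + 1)) → ℝ≥0∞}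
    (hG : AEMeasurable G) :
    AEMeasurable (fun p : ℝ × EuclideanSpace ℝ (Fin d) => G (joinLast p.2 p.1))
      (volume.prod volume) :=
  hG.comp_quasiMeasurePreserving (measurePreserving_splitLast.symm _).quasiMeasurePreserving

theorem lintegral_eq_lintegral_joinLast {G : EuclideanSpace ℝ (Fin (d + 1)) → ℝ≥0∞}
    (hG : AEMeasurable G) : ∫⁻ x, G x = ∫⁻ y, ∫⁻ t, G (joinLast y t) := by
  rw [← (measurePreserving_splitLast.symm _).lintegral_comp_emb
    (splitLast d).symm.measurableEmbedding]
  exact lintegral_prod_symm _ (aemeasurable_comp_joinLast hG)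

theorem lintegral_indicator_Qf_joinLast (G : EuclideanSpace ℝ (Fin (d + 1)) → ℝ≥0∞)
    (y : EuclideanSpace ℝ (Fin d)) :
    ∫⁻ t, (Qf f).indicator G (joinLast y t) =
      (cube d).indicator (fun y => ∫⁻ t in Ioo 0 (f y), G (joinLast y t)) y := by
  by_cases hy : y ∈ cube d
  · rw [indicator_of_mem hy, ← lintegral_indicator measurableSet_Ioo]
    simp [indicator, joinLast_mem_Qf, hy]
  · simp [indicator, joinLast_mem_Qf, hy]

variable {G : EuclideanSpace ℝ (Fin (d + 1)) → ℝ≥0∞}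

theorem setLIntegral_Qf (hQ : MeasurableSet (Qf f))
    (hG : AEMeasurable G (volume.restrict (Qf f))) :
    ∫⁻ x in Qf f, G x = ∫⁻ y in cube d, ∫⁻ t in Ioo 0 (f y), G (joinLast y t) := by
  rw [← lintegral_indicator hQ,
    lintegral_eq_lintegral_joinLast ((aemeasurable_indicator_iff hQ).2 hG),
    ← lintegral_indicator isOpen_cube.measurableSet]
  simp_rw [lintegral_indicator_Qf_joinLast]

theorem aemeasurable_setLIntegral_joinLast (hQ : MeasurableSet (Qf f))
    (hG : AEMeasurable G (volume.restrict (Qf f))) :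
    AEMeasurable (fun y => ∫⁻ t in Ioo 0 (f y), G (joinLast y t)) (volume.restrict (cube d)) := by
  rw [← aemeasurable_indicator_iff isOpen_cube.measurableSet]
  exact (aemeasurable_comp_joinLast ((aemeasurable_indicator_iff hQ).2 hG)).lintegral_prod_left'
    |>.congr (.of_forall (lintegral_indicator_Qf_joinLast G))

end Subgraph

section Estimate

variable {d : ℕ} {u : EuclideanSpace ℝ (Fin (d + 1)) → ℝ}
  {U : Set (EuclideanSpace ℝ (Fin (d + 1)))} {M : ℝ}

theorem lintegral_sq_joinLast_le (hU : IsOpen U) (hu : ContDiffOn ℝ 1 u U)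
    {y : EuclideanSpace ℝ (Fin d)} {b : ℝ} (h1b : 1 ≤ b) (hbM : b ≤ M)
    (hyU : ∀ t ∈ Icc 0 b, joinLast y t ∈ U) :
    ∫⁻ t in Ioo 0 b, ENNReal.ofReal (u (joinLast y t) ^ 2) ≤
      ENNReal.ofReal (2 * M) * (∫⁻ t in Ioo 0 1, ENNReal.ofReal (u (joinLast y t) ^ 2)) +
        ENNReal.ofReal (4 * M ^ 2) *
          ∫⁻ t in Ioo 0 b, ENNReal.ofReal (‖gradient u (joinLast y t)‖ ^ 2) := by
  set e := EuclideanSpace.single (Fin.last d) (1 : ℝ)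
  set g' := fun t => fderiv ℝ u (joinLast y t) e
  have hb : 0 ≤ b := zero_le_one.trans h1b
  have hjoin : ContinuousOn (joinLast y) (Icc 0 b) := (continuous_joinLast y).continuousOn
  have hg : ∀ t ∈ Icc 0 b, HasDerivAt (fun t => u (joinLast y t)) (g' t) t := fun t ht =>
    ((hu.contDiffAt (hU.mem_nhds (hyU t ht))).differentiableAt one_ne_zero).hasFDerivAt
      |>.comp_hasDerivAt t (hasDerivAt_joinLast y t)
  have hg' : ContinuousOn g' (Icc 0 b) :=
    ((hu.continuousOn_fderiv_of_isOpen hU le_rfl).comp hjoin hyU).clm_apply continuousOn_const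
  have hgc : ContinuousOn (fun t => u (joinLast y t) ^ 2) (Icc 0 b) :=
    (hu.continuousOn.comp hjoin hyU).pow 2
  have hg'_le : ∀ t, g' t ^ 2 ≤ ‖gradient u (joinLast y t)‖ ^ 2 := fun t => by
    have := abs_fderiv_apply_le_norm_gradient_mul (u := u) (joinLast y t) e
    rw [PiLp.norm_single, norm_one, mul_one] at this
    simpa only [sq_abs] using pow_le_pow_left₀ (abs_nonneg _) this 2
  have hI₁ : 0 ≤ ∫ t in (0 : ℝ)..1, u (joinLast y t) ^ 2 :=
    intervalIntegral.integral_nonneg zero_le_one fun _ _ => sq_nonneg _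
  have hK : 0 ≤ ∫ t in (0 : ℝ)..b, g' t ^ 2 :=
    intervalIntegral.integral_nonneg hb fun _ _ => sq_nonneg _
  calc ∫⁻ t in Ioo 0 b, ENNReal.ofReal (u (joinLast y t) ^ 2)
      = ENNReal.ofReal (∫ t in (0 : ℝ)..b, u (joinLast y t) ^ 2) :=
        (ofReal_intervalIntegral_eq_setLIntegral_Ioo hb hgc fun _ => sq_nonneg _).symm
    _ ≤ ENNReal.ofReal (2 * M * (∫ t in (0 : ℝ)..1, u (joinLast y t) ^ 2) +
          4 * M ^ 2 * ∫ t in (0 : ℝ)..b, g' t ^ 2) :=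
        ENNReal.ofReal_le_ofReal (integral_sq_le_integral_sq_unit_add h1b hbM hg hg')
    _ = ENNReal.ofReal (2 * M) * (∫⁻ t in Ioo 0 1, ENNReal.ofReal (u (joinLast y t) ^ 2)) +
          ENNReal.ofReal (4 * M ^ 2) * ∫⁻ t in Ioo 0 b, ENNReal.ofReal (g' t ^ 2) := by
        have hM : 0 ≤ M := hb.trans hbM
        rw [ENNReal.ofReal_add (by positivity) (by positivity),
          ENNReal.ofReal_mul (p := 2 * M) (by positivity),
          ENNReal.ofReal_mul (p := 4 * M ^ 2) (by positivity),
          ofReal_intervalIntegral_eq_setLIntegral_Ioo zero_le_one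
            (hgc.mono (Icc_subset_Icc_right h1b)) fun _ => sq_nonneg _,
          ofReal_intervalIntegral_eq_setLIntegral_Ioo (h := fun t => g' t ^ 2) hb (hg'.pow 2)
            fun _ => sq_nonneg _]
    _ ≤ _ := add_le_add_right (mul_le_mul_right
          (lintegral_mono fun t => ENNReal.ofReal_le_ofReal (hg'_le t)) _) _

variable {f : EuclideanSpace ℝ (Fin d) → ℝ}

theorem lintegral_sq_Qf_le (hf : ∀ y ∈ cube d, f y ∈ Icc 1 M) (hfc : ContinuousOn f (cube d))
    (hU : IsOpen U) (hQU : closure (Qf f) ⊆ U) (hu : ContDiffOn ℝ 1 u U) :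
    ∫⁻ x in Qf f, ENNReal.ofReal (u x ^ 2) ≤
      ENNReal.ofReal (2 * M) * (∫⁻ x in Qf fun _ => (1 : ℝ), ENNReal.ofReal (u x ^ 2)) +
        ENNReal.ofReal (4 * M ^ 2) * ∫⁻ x in Qf f, ENNReal.ofReal (‖gradient u x‖ ^ 2) := by
  have hQ : MeasurableSet (Qf f) := (isOpen_Qf hfc).measurableSet
  have hQ₁ : MeasurableSet (Qf fun _ : EuclideanSpace ℝ (Fin d) => (1 : ℝ)) :=
    (isOpen_Qf continuousOn_const).measurableSet
  have hQfU : Qf f ⊆ U := subset_closure.trans hQU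
  have hQ₁U : (Qf fun _ : EuclideanSpace ℝ (Fin d) => (1 : ℝ)) ⊆ U :=
    (Qf_mono fun y hy => (hf y hy).1).trans hQfU
  have hmeas : ∀ {h : EuclideanSpace ℝ (Fin (d + 1)) → ℝ} {s}, ContinuousOn h U → s ⊆ U →
      MeasurableSet s → AEMeasurable (fun x => ENNReal.ofReal (h x)) (volume.restrict s) :=
    fun hh hsU hs => ENNReal.measurable_ofReal.comp_aemeasurable ((hh.mono hsU).aemeasurable hs)
  have hu₂ : ContinuousOn (fun x => u x ^ 2) U := hu.continuousOn.pow 2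
  have hgrad₂ : ContinuousOn (fun x => ‖gradient u x‖ ^ 2) U :=
    (hu.continuousOn_norm_gradient hU).pow 2
  rw [setLIntegral_Qf hQ (hmeas hu₂ hQfU hQ), setLIntegral_Qf hQ₁ (hmeas hu₂ hQ₁U hQ₁),
    setLIntegral_Qf hQ (hmeas hgrad₂ hQfU hQ)]
  calc ∫⁻ y in cube d, ∫⁻ t in Ioo 0 (f y), ENNReal.ofReal (u (joinLast y t) ^ 2)
      ≤ ∫⁻ y in cube d, (ENNReal.ofReal (2 * M) *
          (∫⁻ t in Ioo 0 1, ENNReal.ofReal (u (joinLast y t) ^ 2)) + ENNReal.ofReal (4 * M ^ 2) *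
            ∫⁻ t in Ioo 0 (f y), ENNReal.ofReal (‖gradient u (joinLast y t)‖ ^ 2)) :=
        setLIntegral_mono' isOpen_cube.measurableSet fun y hy =>
          lintegral_sq_joinLast_le hU hu (hf y hy).1 (hf y hy).2 fun t ht =>
            hQU (joinLast_mem_closure_Qf hy (zero_lt_one.trans_le (hf y hy).1) ht)
    _ = _ := by
        rw [lintegral_add_left'
          ((aemeasurable_setLIntegral_joinLast hQ₁ (hmeas hu₂ hQ₁U hQ₁)).const_mul _),
          lintegral_const_mul' _ _ ENNReal.ofReal_ne_top,
          lintegral_const_mul' _ _ ENNReal.ofReal_ne_top]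

theorem integral_sq_Qf_le (hM : 1 ≤ M) (hf : ∀ y ∈ cube d, f y ∈ Icc 1 M)
    (hfc : ContinuousOn f (cube d)) (hU : IsOpen U) (hQU : closure (Qf f) ⊆ U)
    (hu : ContDiffOn ℝ 1 u U) :
    ∫ x in Qf f, u x ^ 2 ≤
      4 * M ^ 2 * ((∫ x in Qf fun _ => (1 : ℝ), u x ^ 2) + ∫ x in Qf f, ‖gradient u x‖ ^ 2) := by
  have hint : ∀ {h : EuclideanSpace ℝ (Fin (d + 1)) → ℝ}, ContinuousOn h U →
      IntegrableOn h (Qf f) :=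
    fun hh => ((hh.mono hQU).integrableOn_compact
      (isCompact_closure_Qf fun y hy => (hf y hy).2)).mono_set subset_closure
  have hu₂ : IntegrableOn (fun x => u x ^ 2) (Qf f) := hint (hu.continuousOn.pow 2)
  have hgrad₂ : IntegrableOn (fun x => ‖gradient u x‖ ^ 2) (Qf f) :=
    hint ((hu.continuousOn_norm_gradient hU).pow 2)
  have hB : 0 ≤ ∫ x in Qf fun _ => (1 : ℝ), u x ^ 2 := integral_nonneg fun _ => sq_nonneg _
  have h := lintegral_sq_Qf_le hf hfc hU hQU hu
  rw [← ofReal_integral_eq_lintegral_ofReal hu₂ (.of_forall fun _ => sq_nonneg _),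
    ← ofReal_integral_eq_lintegral_ofReal (hu₂.mono_set (Qf_mono fun y hy => (hf y hy).1))
      (.of_forall fun _ => sq_nonneg _),
    ← ofReal_integral_eq_lintegral_ofReal hgrad₂ (.of_forall fun _ => sq_nonneg _),
    ← ENNReal.ofReal_mul (by positivity), ← ENNReal.ofReal_mul (by positivity),
    ← ENNReal.ofReal_add (by positivity) (by positivity),
    ENNReal.ofReal_le_ofReal_iff (by positivity)] at h
  nlinarith [mul_le_mul_of_nonneg_right (by nlinarith : 2 * M ≤ 4 * M ^ 2) hB]

end Estimate

theorem stmt_14_general (d : ℕ) (M : ℝ) (hM : 1 < M) :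
    ∃ C₀ > (0 : ℝ), ∀ f : EuclideanSpace ℝ (Fin d) → ℝ,
      (∀ y ∈ cube d, f y ∈ Icc 1 M) →
      (∃ K : NNReal, LipschitzOnWith K f (cube d)) →
      ∀ (u : EuclideanSpace ℝ (Fin (d + 1)) → ℝ) (U : Set (EuclideanSpace ℝ (Fin (d + 1)))),
        IsOpen U → closure (Qf f) ⊆ U → ContDiffOn ℝ 1 u U →
        ∫ x in Qf f, (u x) ^ 2 ≤
          C₀ * ((∫ x in Qf (fun _ => (1 : ℝ)), (u x) ^ 2) +
            ∫ x in Qf f, ‖gradient u x‖ ^ 2) :=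
  ⟨4 * M ^ 2, by positivity, fun _ hf ⟨_, hK⟩ _ _ hU hQU hu =>
    integral_sq_Qf_le hM.le hf hK.continuousOn hU hQU hu⟩

theorem stmt_14 (d : ℕ) (hd : 1 ≤ d) (M : ℝ) (hM : 1 < M) :
    ∃ C₀ > (0 : ℝ), ∀ f : EuclideanSpace ℝ (Fin d) → ℝ,
      (∀ y ∈ cube d, f y ∈ Icc 1 M) →
      (∃ K : NNReal, LipschitzOnWith K f (cube d)) →
      ∀ (u : EuclideanSpace ℝ (Fin (d + 1)) → ℝ) (U : Set (EuclideanSpace ℝ (Fin (d + 1)))),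
        IsOpen U → closure (Qf f) ⊆ U → ContDiffOn ℝ 1 u U →
        ∫ x in Qf f, (u x) ^ 2 ≤
          C₀ * ((∫ x in Qf (fun _ => (1 : ℝ)), (u x) ^ 2) +
            ∫ x in Qf f, ‖gradient u x‖ ^ 2) :=
  stmt_14_general d M hM
end
end
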